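/- arXiv:0906.4868 — 2 statements merged into one kernel-verified Lean document; each statement's English description precedes it below -/
import Mathlib

section
/- Let p be a prime, r ≥ 2 an integer, and n a natural number; write Z_p(n) = αr + β with 0 ≤ β < r (i.e. β = Z_p(n) mod r). Then Z_{p^r}(n+1) = Z_{p^r}(n) if and only if n+1 = p^m · a with a coprime to p and 0 ≤ m < r - β, i.e. if and only if the p-adic valuation m of n+1 satisfies m + β < r. -/
/-- `Z b n` is the number of trailing zeroes of the base-`b` expansion of `n!`,
i.e. the largest `k` such that `b ^ k ∣ n!`. -/
def Z (b n : ℕ) : ℕ := padicValNat b (Nat.factorial n)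

/-! Since `v_{p^r}(N) = ⌊v_p(N) / r⌋` and `Z_p(n + 1) = Z_p(n) + v_p(n + 1)`, the count `Z_{p^r}`
stays put exactly when adding `m = v_p(n + 1)` to `Z_p(n)` does not reach the next multiple of `r`,
i.e. when `m + Z_p(n) % r < r`; and `m` is the exponent of the unique decomposition
`n + 1 = p ^ m * a` with `a` coprime to `p`. -/

theorem Nat.add_div_eq_div_iff {v m r : ℕ} (hr : 0 < r) :
    (v + m) / r = v / r ↔ m + v % r < r := by
  have hmono : v / r ≤ (v + m) / r := Nat.div_le_div_right (Nat.le_add_right v m)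
  have hsplit := Nat.div_add_mod' v r
  rw [show (v + m) / r = v / r ↔ (v + m) / r < v / r + 1 by omega, Nat.div_lt_iff_lt_mul hr,
    add_one_mul]
  omega

theorem padicValNat_pow_left {p r N : ℕ} (hp : p ≠ 1) (hr : 0 < r) (hN : N ≠ 0) :
    padicValNat (p ^ r) N = padicValNat p N / r := by
  have hpr : p ^ r ≠ 1 := by simp [hp, hr.ne']
  refine eq_of_forall_le_iff fun k => ?_
  rw [← padicValNat_dvd_iff_le_of_ne_one hpr hN, ← pow_mul,
    padicValNat_dvd_iff_le_of_ne_one hp hN, Nat.le_div_iff_mul_le hr, mul_comm]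

theorem padicValNat_pow_mul_of_coprime {p a : ℕ} [Fact p.Prime] (m : ℕ) (ha : p.Coprime a) :
    padicValNat p (p ^ m * a) = m := by
  have hpa : ¬p ∣ a := (Nat.Prime.coprime_iff_not_dvd Fact.out).mp ha
  have ha0 : a ≠ 0 := by rintro rfl; exact hpa (dvd_zero p)
  rw [padicValNat.mul (pow_ne_zero m (NeZero.ne p)) ha0, padicValNat.prime_pow,
    padicValNat.eq_zero_of_not_dvd hpa, add_zero]

theorem Z_pow_left {p : ℕ} (r n : ℕ) (hp : p ≠ 1) (hr : 0 < r) : Z (p ^ r) n = Z p n / r :=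
  padicValNat_pow_left hp hr n.factorial_ne_zero

theorem Z_succ {p : ℕ} [Fact p.Prime] (n : ℕ) : Z p (n + 1) = Z p n + padicValNat p (n + 1) := by
  rw [Z, Z, Nat.factorial_succ, padicValNat.mul n.succ_ne_zero n.factorial_ne_zero, add_comm]

theorem Z_prime_pow_no_jump (p r n : ℕ) (hp : p.Prime) (hr : 2 ≤ r) :
    Z (p ^ r) (n + 1) = Z (p ^ r) n ↔
      ∃ m a, Nat.Coprime p a ∧ n + 1 = p ^ m * a ∧ m + Z p n % r < r := by
  have := Fact.mk hp
  have hr₀ : 0 < r := by omega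
  rw [Z_pow_left r _ hp.ne_one hr₀, Z_pow_left r _ hp.ne_one hr₀, Z_succ,
    Nat.add_div_eq_div_iff hr₀]
  constructor
  · intro h
    exact ⟨_, _, Nat.coprime_ordCompl hp n.succ_ne_zero,
      (Nat.ordProj_mul_ordCompl_eq_self _ p).symm, by rwa [Nat.factorization_def _ hp]⟩
  · rintro ⟨m, a, ha, hn, hm⟩
    rwa [hn, padicValNat_pow_mul_of_coprime m ha]
end

section
/- Let p be an odd prime and k > 1 an integer. Then for every integer h with 1 ≤ h < k, the number (1/2) · Σ_{i=1}^{2k} p^{2k-i} - h = (p^{2k} - 1)/(2(p-1)) - h is not in the image of Z_{p^2}. -/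
/-!
By Legendre's formula `v_p((p ^ m)!) = (p ^ m - 1) / (p - 1)`, and
`Z (p ^ 2) n = ⌊v_p(n!) / 2⌋`, so the number in question is `Z (p ^ 2) (p ^ (2k)) - h`.
Since the factor `p ^ (2k)` alone contributes `2k` to `v_p`, the monotone function `Z (p ^ 2)`
jumps by `k` between `p ^ (2k) - 1` and `p ^ (2k)`, skipping the `k - 1` values strictly in between.
-/

open scoped Nat

lemma padicValNat_le_padicValNat_of_dvd {b m n : ℕ} (hn : n ≠ 0) (hmn : m ∣ n) :
    padicValNat b m ≤ padicValNat b n := by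
  rcases eq_or_ne b 1 with rfl | hb
  · simp
  · exact (padicValNat_dvd_iff_le_of_ne_one hb hn).1 (pow_padicValNat_dvd.trans hmn)

lemma Z_monotone (b : ℕ) : Monotone (Z b) := fun _ _ hmn =>
  padicValNat_le_padicValNat_of_dvd (Nat.factorial_ne_zero _) (Nat.factorial_dvd_factorial hmn)

lemma padicValNat_prime_pow_eq_div {p e : ℕ} [Fact p.Prime] (he : 0 < e) (n : ℕ) :
    padicValNat (p ^ e) n = padicValNat p n / e := by
  rcases eq_or_ne n 0 with rfl | hn
  · simp
  refine eq_of_forall_le_iff fun j => ?_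
  have hpe : p ^ e ≠ 1 := (Nat.one_lt_pow he.ne' (Fact.out : p.Prime).one_lt).ne'
  rw [← padicValNat_dvd_iff_le_of_ne_one hpe hn, Nat.le_div_iff_mul_le he, ← pow_mul,
    mul_comm e, padicValNat_dvd_iff_le hn]

lemma sub_one_mul_padicValNat_factorial_prime_pow {p : ℕ} [hp : Fact p.Prime] (m : ℕ) :
    (p - 1) * padicValNat p (p ^ m)! = p ^ m - 1 := by
  have hdigits : p.digits (p ^ m) = List.replicate m 0 ++ [1] := by
    simpa [Nat.digits_of_lt p 1 one_ne_zero hp.out.one_lt] using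
      Nat.digits_base_pow_mul (k := m) hp.out.one_lt Nat.one_pos
  rw [sub_one_mul_padicValNat_factorial, hdigits]
  simp

lemma padicValNat_factorial_prime_pow_sub_one {p : ℕ} [Fact p.Prime] (m : ℕ) :
    padicValNat p (p ^ m - 1)! + m = padicValNat p (p ^ m)! := by
  have hpos : 0 < p ^ m := pow_pos (Fact.out : p.Prime).pos m
  rw [← Nat.mul_factorial_pred hpos.ne', padicValNat.mul hpos.ne' (Nat.factorial_ne_zero _),
    padicValNat.prime_pow, add_comm]

lemma Z_sq_prime_pow_sub_one {p : ℕ} [Fact p.Prime] (k : ℕ) :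
    Z (p ^ 2) (p ^ (2 * k) - 1) + k = Z (p ^ 2) (p ^ (2 * k)) := by
  simp only [Z, padicValNat_prime_pow_eq_div two_pos, ← padicValNat_factorial_prime_pow_sub_one]
  omega

lemma Z_sq_prime_pow {p : ℕ} [Fact p.Prime] (k : ℕ) :
    Z (p ^ 2) (p ^ (2 * k)) = (p ^ (2 * k) - 1) / (2 * (p - 1)) := by
  have hp : 0 < p - 1 := Nat.sub_pos_of_lt (Fact.out : p.Prime).one_lt
  rw [Z, padicValNat_prime_pow_eq_div two_pos, ← sub_one_mul_padicValNat_factorial_prime_pow,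
    mul_comm 2 (p - 1), Nat.mul_div_mul_left _ _ hp]

theorem family_not_in_image_prime_sq_general (p k h : ℕ) (hp : p.Prime)
    (hh1 : 1 ≤ h) (hhk : h < k) :
    (p ^ (2 * k) - 1) / (2 * (p - 1)) - h ∉ Set.range (Z (p ^ 2)) := by
  have : Fact p.Prime := ⟨hp⟩
  have hbelow : Z (p ^ 2) (p ^ (2 * k) - 1) + k = (p ^ (2 * k) - 1) / (2 * (p - 1)) :=
    (Z_sq_prime_pow_sub_one k).trans (Z_sq_prime_pow k)
  have habove : Z (p ^ 2) (p ^ (2 * k) - 1 + 1) = (p ^ (2 * k) - 1) / (2 * (p - 1)) := by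
    rw [Nat.sub_one_add_one (pow_pos hp.pos _).ne', Z_sq_prime_pow]
  rintro ⟨n, hn⟩
  refine (Z_monotone (p ^ 2)).ne_of_lt_of_lt_nat (p ^ (2 * k) - 1) ?_ ?_ n hn <;> omega

theorem family_not_in_image_prime_sq (p k h : ℕ) (hp : p.Prime) (hodd : Odd p)
    (hk : 1 < k) (hh1 : 1 ≤ h) (hhk : h < k) :
    (p ^ (2 * k) - 1) / (2 * (p - 1)) - h ∉ Set.range (Z (p ^ 2)) :=
  family_not_in_image_prime_sq_general p k h hp hh1 hhk
end
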